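/- Let X, Y, Z be discrete random variables on a finite probability space where Y and Z take values in {±1}. Then |I(X;Y) - I(X;Z)| ≤ H(ℙ[Y ≠ Z]), where H is the binary entropy function. -/

import Mathlib

open scoped Classical

/-- Probability of an event under distribution `D` on a finite sample space. -/
noncomputable def pr {Ω : Type*} [Fintype Ω] (D : Ω → ℝ) (p : Ω → Prop) : ℝ :=
  ∑ x, if p x then D x else 0

/-- Shannon entropy (base 2) of a random variable `f` under `D`. -/
noncomputable def ent {Ω A : Type*} [Fintype Ω] (D : Ω → ℝ) (f : Ω → A) : ℝ :=
  -∑ a ∈ Finset.image f Finset.univ,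
      pr D (fun x => f x = a) * Real.logb 2 (pr D (fun x => f x = a))

/-- Mutual information (base 2) between random variables `f` and `g` under `D`. -/
noncomputable def mi {Ω A B : Type*} [Fintype Ω] (D : Ω → ℝ) (f : Ω → A) (g : Ω → B) : ℝ :=
  ent D f + ent D g - ent D (fun x => (f x, g x))

/-- Binary entropy function (base 2). -/
noncomputable def binEnt (p : ℝ) : ℝ := -(p * Real.logb 2 p) - (1 - p) * Real.logb 2 (1 - p)

/-- `D` is a probability distribution. -/
def IsProb {Ω : Type*} [Fintype Ω] (D : Ω → ℝ) : Prop :=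
  (∀ x, 0 ≤ D x) ∧ ∑ x, D x = 1

section Infra
variable {Ω A B C : Type*} [Fintype Ω] {D : Ω → ℝ}

lemma pr_congr {p q : Ω → Prop} (h : ∀ x, p x ↔ q x) : pr D p = pr D q := by
  unfold pr; exact Finset.sum_congr rfl fun x _ => by rw [if_congr (h x) rfl rfl]

lemma pr_nonneg (hD : ∀ x, 0 ≤ D x) (p : Ω → Prop) : 0 ≤ pr D p := by
  unfold pr; exact Finset.sum_nonneg fun x _ => by split <;> simp [hD x]

lemma pr_mono (hD : ∀ x, 0 ≤ D x) {p q : Ω → Prop} (h : ∀ x, p x → q x) :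
    pr D p ≤ pr D q := by
  unfold pr
  refine Finset.sum_le_sum fun x _ => ?_
  by_cases hp : p x
  · rw [if_pos hp, if_pos (h x hp)]
  · rw [if_neg hp]; split <;> simp [hD x]

/-- Push a sum over the image back to a sum over `Ω`. -/
lemma sum_image_pr (f : Ω → A) (φ : A → ℝ) :
    ∑ a ∈ Finset.image f Finset.univ, pr D (fun x => f x = a) * φ a
      = ∑ x, D x * φ (f x) := by
  unfold pr
  have step : ∀ a ∈ Finset.image f Finset.univ,
      (∑ x, if f x = a then D x else 0) * φ a
        = ∑ x, (if f x = a then D x * φ (f x) else 0) := by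
    intro a _
    rw [Finset.sum_mul]
    refine Finset.sum_congr rfl fun x _ => ?_
    by_cases h : f x = a
    · subst h; simp
    · simp [h]
  rw [Finset.sum_congr rfl step, Finset.sum_comm]
  refine Finset.sum_congr rfl fun x _ => ?_
  rw [Finset.sum_ite_eq (Finset.image f Finset.univ) (f x) (fun _ => D x * φ (f x)),
    if_pos (Finset.mem_image_of_mem f (Finset.mem_univ x))]

lemma sum_pr_image (hD : IsProb D) (f : Ω → A) :
    ∑ a ∈ Finset.image f Finset.univ, pr D (fun x => f x = a) = 1 := by
  have := sum_image_pr (D := D) f (fun _ => (1:ℝ))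
  simpa [hD.2] using this

lemma ent_eq_sum_omega (f : Ω → A) :
    ent D f = -∑ x, D x * Real.logb 2 (pr D (fun y => f y = f x)) := by
  rw [ent, sum_image_pr f (fun a => Real.logb 2 (pr D (fun x => f x = a)))]

lemma le_pr_fiber (hD : ∀ x, 0 ≤ D x) (f : Ω → A) (x : Ω) :
    D x ≤ pr D (fun y => f y = f x) := by
  unfold pr
  have := Finset.single_le_sum (f := fun y => if f y = f x then D y else 0)
    (fun y _ => by split <;> simp [hD y]) (Finset.mem_univ x)
  simpa using this

/-- Data processing: entropy of a function of `f` is at most entropy of `f`. -/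
lemma ent_comp_le (hD : ∀ x, 0 ≤ D x) (f : Ω → A) (e : A → B) :
    ent D (fun x => e (f x)) ≤ ent D f := by
  rw [ent_eq_sum_omega, ent_eq_sum_omega, neg_le_neg_iff]
  refine Finset.sum_le_sum fun x _ => ?_
  rcases eq_or_lt_of_le (hD x) with h | h
  · simp [← h]
  · refine mul_le_mul_of_nonneg_left ?_ (le_of_lt h)
    refine Real.logb_le_logb_of_le one_lt_two (lt_of_lt_of_le h (le_pr_fiber hD f x)) ?_
    exact pr_mono hD fun y hy => by simp [hy]

/-- Entropy only depends on the induced fibration. -/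
lemma ent_congr {f : Ω → A} {g : Ω → B} (h : ∀ x y, f x = f y ↔ g x = g y) :
    ent D f = ent D g := by
  rw [ent_eq_sum_omega, ent_eq_sum_omega]
  congr 1
  refine Finset.sum_congr rfl fun x _ => ?_
  rw [pr_congr (fun y => h y x)]

end Infra

section Gibbs
variable {ι : Type*}

/-- Gibbs' inequality. -/
lemma gibbs (S : Finset ι) (a b : ι → ℝ) (ha : ∀ i ∈ S, 0 ≤ a i)
    (hb : ∀ i ∈ S, 0 ≤ b i) (hab : ∀ i ∈ S, a i ≠ 0 → b i ≠ 0)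
    (hsum : ∑ i ∈ S, b i ≤ ∑ i ∈ S, a i) :
    ∑ i ∈ S, a i * Real.logb 2 (b i) ≤ ∑ i ∈ S, a i * Real.logb 2 (a i) := by
  have key : ∀ i ∈ S, a i * Real.logb 2 (b i) - a i * Real.logb 2 (a i)
      ≤ (b i - a i) / Real.log 2 := by
    intro i hi
    rcases eq_or_lt_of_le (ha i hi) with h0 | hpos
    · rw [← h0]
      simp only [zero_mul, sub_zero, zero_sub, neg_zero, sub_zero]
      exact div_nonneg (hb i hi) (Real.log_nonneg one_le_two)
    · have hbpos : 0 < b i := lt_of_le_of_ne (hb i hi) (Ne.symm (hab i hi (ne_of_gt hpos)))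
      have hlog : Real.log (b i / a i) ≤ b i / a i - 1 :=
        Real.log_le_sub_one_of_pos (by positivity)
      have h2 : (0:ℝ) < Real.log 2 := Real.log_pos one_lt_two
      have hrw : a i * Real.logb 2 (b i) - a i * Real.logb 2 (a i)
          = (a i * Real.log (b i / a i)) / Real.log 2 := by
        rw [Real.log_div (ne_of_gt hbpos) (ne_of_gt hpos), Real.logb, Real.logb]
        ring
      rw [hrw, div_le_div_iff_of_pos_right h2]
      calc a i * Real.log (b i / a i) ≤ a i * (b i / a i - 1) :=
            mul_le_mul_of_nonneg_left hlog (le_of_lt hpos)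
        _ = b i - a i := by field_simp
  have h1 := Finset.sum_le_sum key
  have h2 : (0:ℝ) < Real.log 2 := Real.log_pos one_lt_two
  have h3 : ∑ i ∈ S, (b i - a i) / Real.log 2 ≤ 0 := by
    rw [← Finset.sum_div, Finset.sum_sub_distrib]
    exact div_nonpos_of_nonpos_of_nonneg (by linarith) (le_of_lt h2)
  have h4 : ∑ i ∈ S, (a i * Real.logb 2 (b i) - a i * Real.logb 2 (a i))
      = ∑ i ∈ S, a i * Real.logb 2 (b i) - ∑ i ∈ S, a i * Real.logb 2 (a i) :=
    Finset.sum_sub_distrib _ _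
  linarith

end Gibbs

section Marginal
variable {Ω A B C : Type*} [Fintype Ω] {D : Ω → ℝ}

lemma sum_pr_pair_left (f : Ω → A) (g : Ω → B) (y : B) :
    ∑ x ∈ Finset.image f Finset.univ, pr D (fun ω => (f ω, g ω) = (x, y))
      = pr D (fun ω => g ω = y) := by
  unfold pr
  rw [Finset.sum_comm]
  refine Finset.sum_congr rfl fun ω _ => ?_
  dsimp only
  simp only [Prod.mk.injEq, ite_and]
  rw [Finset.sum_ite_eq (Finset.image f Finset.univ) (f ω) (fun _ => if g ω = y then D ω else 0),
    if_pos (Finset.mem_image_of_mem f (Finset.mem_univ ω))]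

lemma sum_pr_pair_right (g : Ω → B) (h : Ω → C) (y : B) :
    ∑ z ∈ Finset.image h Finset.univ, pr D (fun ω => (g ω, h ω) = (y, z))
      = pr D (fun ω => g ω = y) := by
  unfold pr
  rw [Finset.sum_comm]
  refine Finset.sum_congr rfl fun ω _ => ?_
  dsimp only
  have step : ∀ z, (if g ω = y then if h ω = z then D ω else 0 else 0)
      = if h ω = z then (if g ω = y then D ω else 0) else 0 := by
    intro z
    by_cases h1 : h ω = z <;> by_cases h2 : g ω = y <;> simp [h1, h2]
  simp only [Prod.mk.injEq, ite_and, step]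
  rw [Finset.sum_ite_eq (Finset.image h Finset.univ) (h ω) (fun _ => if g ω = y then D ω else 0),
    if_pos (Finset.mem_image_of_mem h (Finset.mem_univ ω))]

end Marginal

section Submod
variable {Ω A B C : Type*} [Fintype Ω] {D : Ω → ℝ}

lemma ent_submodular (hD : IsProb D) (f : Ω → A) (g : Ω → B) (h : Ω → C) :
    ent D (fun ω => (f ω, (g ω, h ω))) + ent D g
      ≤ ent D (fun ω => (f ω, g ω)) + ent D (fun ω => (g ω, h ω)) := by
  set t : Ω → A × B × C := fun ω => (f ω, (g ω, h ω)) with ht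
  set p : A × B × C → ℝ := fun s => pr D (fun ω => t ω = s) with hp
  set q : A × B → ℝ := fun u => pr D (fun ω => (f ω, g ω) = u) with hqdef
  set r : B × C → ℝ := fun v => pr D (fun ω => (g ω, h ω) = v) with hrdef
  set m : B → ℝ := fun y => pr D (fun ω => g ω = y) with hmdef
  set b : A × B × C → ℝ := fun s => q (s.1, s.2.1) * r s.2 / m s.2.1 with hbdef
  set S := @Finset.image _ _ (fun a b => Classical.propDecidable (a = b)) t Finset.univ with hS
  set T := (Finset.image f Finset.univ) ×ˢ
      ((Finset.image g Finset.univ) ×ˢ (Finset.image h Finset.univ)) with hT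
  have hq : ∀ s, p s ≤ q (s.1, s.2.1) :=
    fun s => pr_mono hD.1 (fun ω hω => by rw [← hω])
  have hr : ∀ s, p s ≤ r s.2 :=
    fun s => pr_mono hD.1 (fun ω hω => by rw [← hω])
  have hm : ∀ s, p s ≤ m s.2.1 :=
    fun s => pr_mono hD.1 (fun ω hω => by rw [← hω])
  have hqn : ∀ u, 0 ≤ q u := fun u => pr_nonneg hD.1 _
  have hrn : ∀ v, 0 ≤ r v := fun v => pr_nonneg hD.1 _
  have hmn : ∀ y, 0 ≤ m y := fun y => pr_nonneg hD.1 _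
  have hpn : ∀ s, 0 ≤ p s := fun s => pr_nonneg hD.1 _
  have hbn : ∀ s, 0 ≤ b s := fun s => div_nonneg (mul_nonneg (hqn _) (hrn _)) (hmn _)
  -- sum of b over the big product set is 1
  have hTsum : ∑ s ∈ T, b s = 1 := by
    rw [hT, Finset.sum_product]
    have inner : ∀ x ∈ Finset.image f Finset.univ,
        ∑ v ∈ (Finset.image g Finset.univ) ×ˢ (Finset.image h Finset.univ), b (x, v)
          = ∑ y ∈ Finset.image g Finset.univ, q (x, y) * m y / m y := by
      intro x _
      rw [Finset.sum_product]
      refine Finset.sum_congr rfl fun y _ => ?_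
      have : ∀ z ∈ Finset.image h Finset.univ,
          b (x, (y, z)) = q (x, y) / m y * r (y, z) := by
        intro z _
        rw [hbdef]
        dsimp only
        rw [mul_div_right_comm]
      rw [Finset.sum_congr rfl this, ← Finset.mul_sum, sum_pr_pair_right g h y,
        mul_div_right_comm]
    rw [Finset.sum_congr rfl inner, Finset.sum_comm]
    have inner2 : ∀ y ∈ Finset.image g Finset.univ,
        ∑ x ∈ Finset.image f Finset.univ, q (x, y) * m y / m y = m y := by
      intro y _
      rw [← Finset.sum_div, ← Finset.sum_mul, sum_pr_pair_left f g y]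
      rcases eq_or_ne (m y) 0 with h0 | h0
      · simp [h0]
      · field_simp; rfl
    rw [Finset.sum_congr rfl inner2, sum_pr_image hD g]
  have hST : S ⊆ T := by
    intro s hs
    rw [hS] at hs
    rcases (@Finset.mem_image _ _ (fun a b => Classical.propDecidable (a = b)) t Finset.univ s).mp hs with ⟨ω, _, rfl⟩
    rw [hT]
    simp only [Finset.mem_product]
    exact ⟨Finset.mem_image_of_mem f (Finset.mem_univ ω),
      Finset.mem_image_of_mem g (Finset.mem_univ ω),
      Finset.mem_image_of_mem h (Finset.mem_univ ω)⟩
  have hSsum : ∑ s ∈ S, b s ≤ 1 := by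
    rw [← hTsum]
    exact Finset.sum_le_sum_of_subset_of_nonneg hST (fun s _ _ => hbn s)
  have hpsum : ∑ s ∈ S, p s = 1 := by
    rw [hS]; simp only [hp]; exact sum_pr_image hD t
  -- Gibbs
  have hgibbs : ∑ s ∈ S, p s * Real.logb 2 (b s) ≤ ∑ s ∈ S, p s * Real.logb 2 (p s) := by
    refine gibbs S p b (fun s _ => hpn s) (fun s _ => hbn s) (fun s _ hne => ?_)
      (by rw [hpsum]; exact hSsum)
    have hps : 0 < p s := lt_of_le_of_ne (hpn s) (Ne.symm hne)
    have h1 : 0 < q (s.1, s.2.1) := lt_of_lt_of_le hps (hq s)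
    have h2 : 0 < r s.2 := lt_of_lt_of_le hps (hr s)
    have h3 : 0 < m s.2.1 := lt_of_lt_of_le hps (hm s)
    have : 0 < b s := by rw [hbdef]; dsimp only; positivity
    exact ne_of_gt this
  -- split the log of b
  have hsplit : ∀ s ∈ S, p s * Real.logb 2 (b s)
      = p s * Real.logb 2 (q (s.1, s.2.1)) + p s * Real.logb 2 (r s.2)
        - p s * Real.logb 2 (m s.2.1) := by
    intro s _
    rcases eq_or_ne (p s) 0 with h0 | h0
    · simp [h0]
    · have hps : 0 < p s := lt_of_le_of_ne (hpn s) (Ne.symm h0)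
      have h1 : 0 < q (s.1, s.2.1) := lt_of_lt_of_le hps (hq s)
      have h2 : 0 < r s.2 := lt_of_lt_of_le hps (hr s)
      have h3 : 0 < m s.2.1 := lt_of_lt_of_le hps (hm s)
      have : b s = q (s.1, s.2.1) * r s.2 / m s.2.1 := rfl
      rw [this, Real.logb_div (by positivity) (ne_of_gt h3),
        Real.logb_mul (ne_of_gt h1) (ne_of_gt h2)]
      ring
  rw [Finset.sum_congr rfl hsplit] at hgibbs
  -- identify the pieces with entropies
  have eq1 : ∑ s ∈ S, p s * Real.logb 2 (q (s.1, s.2.1)) = -ent D (fun ω => (f ω, g ω)) := by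
    rw [hS]; simp only [hp]
    rw [sum_image_pr t (fun s => Real.logb 2 (q (s.1, s.2.1)))]
    rw [ent, neg_neg,
      sum_image_pr (fun ω => (f ω, g ω)) (fun u => Real.logb 2 (q u))]
  have eq2 : ∑ s ∈ S, p s * Real.logb 2 (r s.2) = -ent D (fun ω => (g ω, h ω)) := by
    rw [hS]; simp only [hp]
    rw [sum_image_pr t (fun s => Real.logb 2 (r s.2))]
    rw [ent, neg_neg,
      sum_image_pr (fun ω => (g ω, h ω)) (fun v => Real.logb 2 (r v))]
  have eq3 : ∑ s ∈ S, p s * Real.logb 2 (m s.2.1) = -ent D g := by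
    rw [hS]; simp only [hp]
    rw [sum_image_pr t (fun s => Real.logb 2 (m s.2.1))]
    rw [ent, neg_neg, sum_image_pr g (fun y => Real.logb 2 (m y))]
  have eq4 : ∑ s ∈ S, p s * Real.logb 2 (p s) = -ent D t := by
    rw [hS]; simp only [hp]
    rw [ent, neg_neg]
  rw [eq4] at hgibbs
  have hsum3 : ∑ s ∈ S, (p s * Real.logb 2 (q (s.1, s.2.1)) + p s * Real.logb 2 (r s.2)
      - p s * Real.logb 2 (m s.2.1))
      = (∑ s ∈ S, p s * Real.logb 2 (q (s.1, s.2.1)))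
        + (∑ s ∈ S, p s * Real.logb 2 (r s.2))
        - (∑ s ∈ S, p s * Real.logb 2 (m s.2.1)) := by
    rw [Finset.sum_sub_distrib, Finset.sum_add_distrib]
  rw [hsum3, eq1, eq2, eq3] at hgibbs
  linarith

end Submod


section Rest
variable {Ω A B C : Type*} [Fintype Ω] {D : Ω → ℝ}

lemma ent_const (hD : IsProb D) (c : B) : ent D (fun _ : Ω => c) = 0 := by
  rw [ent_eq_sum_omega]
  have h1 : pr D (fun _ : Ω => True) = 1 := by
    unfold pr; simpa using hD.2
  simp [h1]

lemma ent_pair_le (hD : IsProb D) (f : Ω → A) (h : Ω → C) :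
    ent D (fun ω => (f ω, h ω)) ≤ ent D f + ent D h := by
  have hsub := ent_submodular hD f (fun _ => ()) h
  have e1 : ent D (fun ω => (f ω, (Unit.unit, h ω))) = ent D (fun ω => (f ω, h ω)) :=
    ent_congr (by intro x y; simp [Prod.ext_iff])
  have e2 : ent D (fun ω => (f ω, Unit.unit)) = ent D f :=
    ent_congr (by intro x y; simp [Prod.ext_iff])
  have e3 : ent D (fun ω => (Unit.unit, h ω)) = ent D h :=
    ent_congr (by intro x y; simp [Prod.ext_iff])
  have e4 : ent D (fun _ : Ω => Unit.unit) = 0 := ent_const hD _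
  rw [e1, e2, e3, e4] at hsub
  linarith

lemma pr_add_pr_not (hD : IsProb D) (p : Ω → Prop) :
    pr D p + pr D (fun x => ¬ p x) = 1 := by
  unfold pr
  rw [← Finset.sum_add_distrib]
  rw [Finset.sum_congr rfl (g := D) (fun x _ => by by_cases h : p x <;> simp [h])]
  exact hD.2

lemma ent_bool (hD : IsProb D) (W : Ω → Bool) :
    ent D W = binEnt (pr D (fun x => W x = true)) := by
  set p := pr D (fun x => W x = true) with hpdef
  have hfalse : pr D (fun x => W x = false) = 1 - p := by
    have h1 := pr_add_pr_not hD (fun x => W x = true)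
    have h2 : pr D (fun x => ¬ W x = true) = pr D (fun x => W x = false) :=
      pr_congr (fun x => by simp)
    rw [h2] at h1
    linarith
  have hzero : ∀ a ∈ (Finset.univ : Finset Bool), a ∉ @Finset.image _ _ (fun a b => Classical.propDecidable (a = b)) W Finset.univ →
      pr D (fun x => W x = a) * Real.logb 2 (pr D (fun x => W x = a)) = 0 := by
    intro a _ ha
    have : pr D (fun x => W x = a) = 0 := by
      unfold pr
      refine Finset.sum_eq_zero fun x _ => ?_
      rw [if_neg]
      intro hx
      exact ha ((@Finset.mem_image _ _ (fun a b => Classical.propDecidable (a = b)) W Finset.univ a).mpr ⟨x, Finset.mem_univ x, hx⟩)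
    rw [this]; simp
  rw [ent, Finset.sum_subset (Finset.subset_univ _) hzero, Fintype.sum_bool]
  rw [hfalse, ← hpdef, binEnt]
  ring

end Rest

section Final
variable {Ω A : Type*} [Fintype Ω] {D : Ω → ℝ}

lemma mi_sub_mi_le (hD : IsProb D) (X : Ω → A) (Y Z : Ω → ℤ)
    (hY : ∀ ω, Y ω = 1 ∨ Y ω = -1) (hZ : ∀ ω, Z ω = 1 ∨ Z ω = -1) :
    mi D X Y - mi D X Z ≤ binEnt (pr D (fun ω => Y ω ≠ Z ω)) := by
  set W : Ω → Bool := fun ω => decide (Y ω ≠ Z ω) with hWdef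
  have hprW : pr D (fun x => W x = true) = pr D (fun ω => Y ω ≠ Z ω) :=
    pr_congr (fun x => by simp [hWdef])
  have hentW : ent D W = binEnt (pr D (fun ω => Y ω ≠ Z ω)) := by
    rw [ent_bool hD W, hprW]
  -- H(Y,Z) = H(W,Z)
  have hYZ : ent D (fun ω => (Y ω, Z ω)) = ent D (fun ω => (W ω, Z ω)) := by
    refine ent_congr ?_
    intro x y
    simp only [hWdef, Prod.mk.injEq, decide_eq_decide]
    constructor
    · rintro ⟨h1, h2⟩; rw [h1, h2]; tauto
    · rintro ⟨h1, h2⟩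
      refine ⟨?_, h2⟩
      rcases hY x with e1 | e1 <;> rcases hY y with e2 | e2 <;>
        rcases hZ x with e3 | e3 <;>
        simp_all
  have h1 : ent D (fun ω => (W ω, Z ω)) ≤ ent D W + ent D Z := ent_pair_le hD W Z
  have h2 : ent D (fun ω => (X ω, Z ω)) ≤ ent D (fun ω => (X ω, (Y ω, Z ω))) :=
    ent_comp_le hD.1 (fun ω => (X ω, (Y ω, Z ω))) (fun s => (s.1, s.2.2))
  have h3 := ent_submodular hD X Y Z
  rw [mi, mi]
  rw [hentW] at h1
  rw [hYZ] at h3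
  linarith

end Final

/-- For binary random variables `Y, Z` (valued in `{±1}`),
`|I(X;Y) - I(X;Z)| ≤ H(ℙ[Y ≠ Z])`. -/
theorem abs_mi_sub_mi_le_binEnt {Ω A : Type*} [Fintype Ω] (D : Ω → ℝ) (hD : IsProb D)
    (X : Ω → A) (Y Z : Ω → ℤ)
    (hY : ∀ ω, Y ω = 1 ∨ Y ω = -1) (hZ : ∀ ω, Z ω = 1 ∨ Z ω = -1) :
    |mi D X Y - mi D X Z| ≤ binEnt (pr D (fun ω => Y ω ≠ Z ω)) := by
  rw [abs_sub_le_iff]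
  refine ⟨mi_sub_mi_le hD X Y Z hY hZ, ?_⟩
  have := mi_sub_mi_le hD X Z Y hZ hY
  rwa [pr_congr (fun ω => ne_comm)] at this
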